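/- arXiv:cond-mat/0502205 — 4 statements merged into one kernel-verified Lean document; each statement's English description precedes it below -/
import Mathlib

section
/- Let M(y,z) be the n×n matrix with entries M_{1,1} = z_1 - y_1, M_{j,j} = -y_j for 2 ≤ j ≤ n, M_{j+1,j} = y_j for 1 ≤ j ≤ n-1, M_{1,j} = z_j for j ≥ 2, and 0 otherwise. Then its characteristic polynomial satisfies det(λI - M(y,z)) = (λ + y_1 - z_1)·∏_{i=2}^n (λ + y_i) - ∑_{j=2}^n [(∏_{i=1}^{j-1} y_i)·z_j·∏_{i=j+1}^n (λ + y_i)]. -/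
/-!
`λI - M(y, z)` is lower bidiagonal, with diagonal `λ + yᵢ` and subdiagonal `-yᵢ`, except for its
first row `w = (λ + y₀ - z₀, -z₁, …, -zₙ₋₁)`. Expanding along the last column, whose only nonzero
entries lie in the first and last rows, gives the recurrence `Dₖ₊₁ = (λ + yₖ) Dₖ + wₖ ∏_{i<k} yᵢ`:
the minor of `wₖ` is upper triangular with diagonal `-y`, which absorbs the cofactor sign. Hence
`det = ∑ⱼ wⱼ ∏_{i<j} yᵢ ∏_{i>j} (λ + yᵢ)`, and splitting off `j = 0` gives the formula.
-/

open Finset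

theorem Fin.prod_Ioi_castSucc {M : Type*} [CommMonoid M] {n : ℕ} (f : Fin (n + 1) → M)
    (a : Fin n) : ∏ i > a.castSucc, f i = (∏ i > a, f i.castSucc) * f (Fin.last n) := by
  rw [← Ioc_top, Fin.top_eq_last, ← prod_Ioo_mul_eq_prod_Ioc (Fin.castSucc_lt_last a),
    ← Fin.map_castSuccEmb_Ioi, prod_map]
  rfl

section TopRowBidiagonal

variable {R : Type*} [CommRing R] {n : ℕ}

def topRowBidiagonal (w d s : Fin (n + 1) → R) : Matrix (Fin (n + 1)) (Fin (n + 1)) R :=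
  Matrix.of fun i j =>
    if i = 0 then w j else if i = j then d j else if (i : ℕ) = j + 1 then s j else 0

theorem topRowBidiagonal_zero_apply (w d s : Fin (n + 1) → R) (j : Fin (n + 1)) :
    topRowBidiagonal w d s 0 j = w j := by
  rw [topRowBidiagonal, Matrix.of_apply, if_pos rfl]

theorem topRowBidiagonal_apply_of_ne_zero (w d s : Fin (n + 1) → R) {i : Fin (n + 1)}
    (hi : i ≠ 0) (j : Fin (n + 1)) :
    topRowBidiagonal w d s i j = if i = j then d j else if (i : ℕ) = j + 1 then s j else 0 := by
  rw [topRowBidiagonal, Matrix.of_apply, if_neg hi]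

theorem topRowBidiagonal_submatrix_castSucc (w d s : Fin (n + 2) → R) :
    (topRowBidiagonal w d s).submatrix Fin.castSucc Fin.castSucc =
      topRowBidiagonal (w ∘ Fin.castSucc) (d ∘ Fin.castSucc) (s ∘ Fin.castSucc) := by
  ext i j
  simp only [topRowBidiagonal, Matrix.submatrix_apply, Matrix.of_apply, Function.comp_apply,
    Fin.castSucc_eq_zero_iff, Fin.castSucc_inj, Fin.val_castSucc]

theorem det_topRowBidiagonal_submatrix_succ_castSucc (w d s : Fin (n + 2) → R) :
    ((topRowBidiagonal w d s).submatrix Fin.succ Fin.castSucc).det =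
      ∏ i : Fin (n + 1), s i.castSucc := by
  simp only [Matrix.submatrix, topRowBidiagonal_apply_of_ne_zero _ _ _ (Fin.succ_ne_zero _),
    Fin.ext_iff, Fin.val_succ, Fin.val_castSucc]
  rw [Matrix.det_of_isUpperTriangular]
  · simp
  · intro i j hji
    have : (j : ℕ) < i := hji
    rw [Matrix.of_apply, if_neg (by omega), if_neg (by omega)]

theorem det_topRowBidiagonal_succ (w d s : Fin (n + 2) → R) :
    (topRowBidiagonal w d s).det =
      d (Fin.last (n + 1)) *
          (topRowBidiagonal (w ∘ Fin.castSucc) (d ∘ Fin.castSucc) (s ∘ Fin.castSucc)).det +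
        (-1) ^ (n + 1) * w (Fin.last (n + 1)) * ∏ i : Fin (n + 1), s i.castSucc := by
  have hlast : Fin.last (n + 1) ≠ 0 := Fin.last_pos.ne'
  rw [Matrix.det_succ_column _ (Fin.last (n + 1)), Fintype.sum_eq_add 0 _ hlast.symm]
  · rw [Fin.succAbove_zero, Fin.succAbove_last, det_topRowBidiagonal_submatrix_succ_castSucc,
      topRowBidiagonal_submatrix_castSucc, topRowBidiagonal_zero_apply,
      topRowBidiagonal_apply_of_ne_zero _ _ _ hlast, if_pos rfl, Fin.val_zero, Fin.val_last,
      Even.neg_one_pow ⟨n + 1, rfl⟩]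
    ring
  · rintro i ⟨hi0, hilast⟩
    rw [topRowBidiagonal_apply_of_ne_zero _ _ _ hi0, if_neg hilast,
      if_neg (by rw [Fin.val_last]; omega), mul_zero, zero_mul]

theorem det_topRowBidiagonal (w d s : Fin (n + 1) → R) :
    (topRowBidiagonal w d s).det = ∑ j, w j * (∏ i < j, -s i) * ∏ i > j, d i := by
  induction n with
  | zero =>
    have : Iio (0 : Fin 1) = ∅ ∧ Ioi (0 : Fin 1) = ∅ := by decide
    simp [topRowBidiagonal, Matrix.det_unique, this]
  | succ n ih =>
    rw [det_topRowBidiagonal_succ, ih, Fin.sum_univ_castSucc (n := n + 1)]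
    simp only [Fin.prod_Iio_castSucc, Fin.prod_Ioi_castSucc, Fin.Iio_last_eq_map, prod_map,
      Fin.coe_castSuccEmb, Function.comp_apply]
    rw [← Fin.top_eq_last, Ioi_top, prod_empty, prod_neg, card_univ, Fintype.card_fin, mul_sum]
    congr 1
    · exact sum_congr rfl fun j _ => by ring
    · ring

end TopRowBidiagonal

/-- The characteristic polynomial of the matrix `M(y,z)` (with `M₁₁ = z₁ - y₁`,
`Mⱼⱼ = -yⱼ` for `j ≥ 2`, `M_{j+1,j} = yⱼ`, `M_{1,j} = zⱼ` for `j ≥ 2`, and `0` otherwise;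
indices are `0`-based in the formalization) satisfies
`det(λI - M) = (λ + y₁ - z₁)·∏_{i=2}^n (λ + yᵢ) - ∑_{j=2}^n (∏_{i<j} yᵢ)·zⱼ·∏_{i>j} (λ + yᵢ)`. -/
theorem stmt_10 (n : ℕ) [NeZero n] (y z : Fin n → ℝ) (lam : ℝ) :
    Matrix.det (lam • (1 : Matrix (Fin n) (Fin n) ℝ) -
        Matrix.of (fun i j : Fin n =>
          if i = 0 ∧ j = 0 then z 0 - y 0
          else if i = j then -y j
          else if (i : ℕ) = (j : ℕ) + 1 then y j
          else if i = 0 then z j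
          else 0))
      = (lam + y 0 - z 0) * ∏ i ∈ Finset.Ioi (0 : Fin n), (lam + y i)
        - ∑ j ∈ Finset.Ioi (0 : Fin n),
            (∏ i ∈ Finset.Iio j, y i) * z j * ∏ i ∈ Finset.Ioi j, (lam + y i) := by
  obtain ⟨m, rfl⟩ := Nat.exists_eq_add_one_of_ne_zero (NeZero.ne n)
  have hmatrix : lam • (1 : Matrix (Fin (m + 1)) (Fin (m + 1)) ℝ) -
      Matrix.of (fun i j : Fin (m + 1) =>
        if i = 0 ∧ j = 0 then z 0 - y 0
        else if i = j then -y j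
        else if (i : ℕ) = (j : ℕ) + 1 then y j
        else if i = 0 then z j
        else 0) =
      topRowBidiagonal (fun j => if j = 0 then lam + y 0 - z 0 else -z j) (fun j => lam + y j)
        (fun j => -y j) := by
    ext i j
    rcases eq_or_ne i 0 with rfl | hi
    · rw [topRowBidiagonal_zero_apply]
      by_cases hj : j = 0
      · simp only [hj, Matrix.sub_apply, Matrix.smul_apply, Matrix.one_apply_eq, smul_eq_mul,
          mul_one, Matrix.of_apply, and_self, ↓reduceIte]
        ring
      · simp [hj, Ne.symm hj]
    · rw [topRowBidiagonal_apply_of_ne_zero _ _ _ hi]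
      simp only [Matrix.sub_apply, Matrix.smul_apply, Matrix.one_apply, Matrix.of_apply,
        smul_eq_mul, hi, false_and, if_false]
      split_ifs <;> ring
  rw [hmatrix, det_topRowBidiagonal, ← Ici_bot, bot_eq_zero, ← add_sum_Ioi_eq_sum_Ici,
    ← bot_eq_zero, Iio_bot, prod_empty, bot_eq_zero, if_pos rfl, mul_one,
    sub_eq_add_neg _ (∑ j ∈ _, _), ← sum_neg_distrib]
  congr 1
  refine sum_congr rfl fun j hj => ?_
  simp only [if_neg (mem_Ioi.mp hj).ne', neg_neg]
  ring
end

section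
/- Suppose y_i > 0 for 1 ≤ i < n, z_i ≥ 0 for 1 ≤ i < n, y_n = 0, and z_n > 0. Then the polynomial P(λ) = (λ + y_1 - z_1)·∏_{i=2}^n (λ + y_i) - ∑_{j=2}^n (∏_{i=1}^{j-1} y_i)·z_j·∏_{i=j+1}^n (λ + y_i) has a strictly positive real root. -/
open Finset

/-- The characteristic polynomial `P(λ, y, z)` of the matrix `M(y,z)`
(indices are `0`-based, so index `0` corresponds to the paper's index `1` and
`Fin.last` corresponds to the paper's index `n`). -/
noncomputable def charP (n : ℕ) [NeZero n] (lam : ℝ) (y z : Fin n → ℝ) : ℝ :=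
  (lam + y 0 - z 0) * ∏ i ∈ Finset.Ioi (0 : Fin n), (lam + y i)
    - ∑ j ∈ Finset.Ioi (0 : Fin n),
        (∏ i ∈ Finset.Iio j, y i) * z j * ∏ i ∈ Finset.Ioi j, (lam + y i)

open scoped Polynomial

/-!
`P` is the evaluation of a monic real polynomial of degree `n`, so `P(λ) → +∞` as `λ → ∞`.
Since `y` vanishes at the last index, every product `∏_{i>j} (0 + yᵢ)` with `j` not last is zero,
leaving `P(0) = -(∏_{i<n} yᵢ) zₙ < 0`; the intermediate value theorem gives a root in `(0, ∞)`.
-/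

namespace Polynomial

theorem Monic.exists_pos_isRoot_of_eval_zero_neg {p : ℝ[X]} (hp : p.Monic)
    (hdeg : 0 < p.natDegree) (h0 : p.eval 0 < 0) : ∃ x, 0 < x ∧ p.IsRoot x := by
  have htop : Filter.Tendsto (fun x => p.eval x) Filter.atTop Filter.atTop :=
    p.tendsto_atTop_of_leadingCoeff_nonneg (natDegree_pos_iff_degree_pos.mp hdeg)
      (by rw [hp.leadingCoeff]; exact zero_le_one)
  obtain ⟨b, hb, hb0⟩ :=
    ((htop.eventually_gt_atTop 0).and (Filter.eventually_gt_atTop 0)).exists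
  obtain ⟨x, hx, hroot⟩ :=
    intermediate_value_Ioo hb0.le p.continuous.continuousOn ⟨h0, hb⟩
  exact ⟨x, hx.1, hroot⟩

section ProdXAddC

variable {ι R : Type*} [CommRing R] (s : Finset ι) (a : ι → R)

theorem monic_prod_X_add_C : (∏ i ∈ s, (X + C (a i))).Monic :=
  monic_prod_of_monic _ _ fun _ _ => monic_X_add_C _

theorem natDegree_prod_X_add_C [Nontrivial R] :
    (∏ i ∈ s, (X + C (a i))).natDegree = #s := by
  simp [natDegree_prod_of_monic _ _ fun _ _ => monic_X_add_C _]

end ProdXAddC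

end Polynomial

section CharPoly

open Polynomial

variable {n : ℕ} [NeZero n] (y z : Fin n → ℝ)

noncomputable def charPoly : ℝ[X] :=
  (X + C (y 0 - z 0)) * ∏ i ∈ Ioi (0 : Fin n), (X + C (y i))
    - ∑ j ∈ Ioi (0 : Fin n), C ((∏ i ∈ Iio j, y i) * z j) * ∏ i ∈ Ioi j, (X + C (y i))

theorem natDegree_charPoly_leading :
    ((X + C (y 0 - z 0)) * ∏ i ∈ Ioi (0 : Fin n), (X + C (y i))).natDegree = n := by
  rw [natDegree_mul (monic_X_add_C _).ne_zero (monic_prod_X_add_C _ _).ne_zero,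
    natDegree_X_add_C, natDegree_prod_X_add_C, Fin.card_Ioi, Fin.val_zero]
  have := NeZero.ne n
  omega

theorem natDegree_charPoly_correction_lt :
    (∑ j ∈ Ioi (0 : Fin n), C ((∏ i ∈ Iio j, y i) * z j) *
      ∏ i ∈ Ioi j, (X + C (y i))).natDegree < n := by
  have hle : ∀ j ∈ Ioi (0 : Fin n), (C ((∏ i ∈ Iio j, y i) * z j) *
      ∏ i ∈ Ioi j, (X + C (y i))).natDegree ≤ n - 1 := fun j _ =>
    (natDegree_C_mul_le _ _).trans <| by rw [natDegree_prod_X_add_C, Fin.card_Ioi]; omega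
  have := NeZero.ne n
  exact (natDegree_sum_le_of_forall_le _ _ hle).trans_lt (by omega)

theorem charPoly_monic : (charPoly y z).Monic :=
  ((monic_X_add_C _).mul (monic_prod_X_add_C _ _)).sub_of_left <| degree_lt_degree <| by
    rw [natDegree_charPoly_leading]; exact natDegree_charPoly_correction_lt y z

theorem natDegree_charPoly : (charPoly y z).natDegree = n := by
  rw [charPoly, natDegree_sub_eq_left_of_natDegree_lt] <;> rw [natDegree_charPoly_leading]
  exact natDegree_charPoly_correction_lt y z

end CharPoly

theorem eval_charPoly {n : ℕ} [NeZero n] (y z : Fin n → ℝ) (lam : ℝ) :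
    (charPoly y z).eval lam = charP n lam y z := by
  simp only [charPoly, charP, Polynomial.eval_sub, Polynomial.eval_mul, Polynomial.eval_add,
    Polynomial.eval_X, Polynomial.eval_C, Polynomial.eval_prod, Polynomial.eval_finsetSum]
  ring

theorem charP_zero_of_last_eq_zero {n : ℕ} [NeZero n] {y : Fin n → ℝ} (z : Fin n → ℝ)
    (hyn : y ⊤ = 0) : charP n 0 y z = -(∏ i ∈ Iio ⊤, y i) * z ⊤ := by
  rcases (Fin.zero_le (⊤ : Fin n)).eq_or_lt with h | h
  · have hIio : Iio (⊤ : Fin n) = ∅ := by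
      rw [← h]; exact Iio_eq_empty.mpr fun b _ => Fin.zero_le b
    rw [charP, h, Ioi_top, hIio, hyn]
    simp
  · have hprod : ∀ j : Fin n, j < ⊤ → ∏ i ∈ Ioi j, (0 + y i) = 0 := fun j hj =>
      prod_eq_zero (mem_Ioi.mpr hj) (by rw [hyn, zero_add])
    rw [charP, hprod 0 h, sum_eq_single_of_mem ⊤ (mem_Ioi.mpr h)
      fun j _ hj => by rw [hprod j (lt_top_iff_ne_top.mpr hj), mul_zero], Ioi_top]
    simp

theorem stmt_11_general (n : ℕ) [NeZero n] (y z : Fin n → ℝ)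
    (hy : ∀ i : Fin n, i < (⊤ : Fin n) → 0 < y i)
    (hyn : y ((⊤ : Fin n)) = 0) (hzn : 0 < z ((⊤ : Fin n))) :
    ∃ lam : ℝ, 0 < lam ∧ charP n lam y z = 0 := by
  have hprod : 0 < ∏ i ∈ Iio ⊤, y i := prod_pos fun i hi => hy i (mem_Iio.mp hi)
  have h0 : (charPoly y z).eval 0 < 0 := by
    rw [eval_charPoly, charP_zero_of_last_eq_zero z hyn, neg_mul]
    exact neg_neg_of_pos (mul_pos hprod hzn)
  obtain ⟨lam, hlam, hroot⟩ := (charPoly_monic y z).exists_pos_isRoot_of_eval_zero_neg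
    (by rw [natDegree_charPoly]; exact NeZero.pos n) h0
  exact ⟨lam, hlam, by rw [← eval_charPoly]; exact hroot⟩

/-- If `yᵢ > 0` for `i < n`, `zᵢ ≥ 0` for `i < n`, `yₙ = 0` and `zₙ > 0`, then
`P(λ) = (λ + y₁ - z₁)·∏_{i=2}^n (λ + yᵢ) - ∑_{j=2}^n (∏_{i<j} yᵢ)·zⱼ·∏_{i>j} (λ + yᵢ)` has a
strictly positive real root. -/
theorem stmt_11 (n : ℕ) [NeZero n] (y z : Fin n → ℝ)
    (hy : ∀ i : Fin n, i < (⊤ : Fin n) → 0 < y i)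
    (hz : ∀ i : Fin n, i < (⊤ : Fin n) → 0 ≤ z i)
    (hyn : y ((⊤ : Fin n)) = 0) (hzn : 0 < z ((⊤ : Fin n))) :
    ∃ lam : ℝ, 0 < lam ∧ charP n lam y z = 0 :=
  stmt_11_general n y z hy hyn hzn
end

section
/- Under the assumptions y_i > 0 for i < n, z_i ≥ 0 for i < n, y_n = 0, z_n > 0, the partial derivative ∂P/∂z_k evaluated at λ = w is strictly negative for every 1 ≤ k ≤ n, where w is the largest real root of P and P(λ,y,z) is the characteristic polynomial of M(y,z). -/
/-!
`P` is affine in `z`, with `∂P/∂z_k = -(∏_{i<k} y_i) ∏_{i>k} (λ + y_i)`, which is negative at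
`λ = w` as soon as `w > 0`. And `w > 0`: since `y_n = 0`, only the `j = n` term survives in
`P(0) = -(∏_{i<n} y_i) z_n < 0`, while `P` is monic in `λ`, so `P` has a positive root.
-/

open Finset

open Filter

theorem exists_gt_eq_zero_of_tendsto_atTop {f : ℝ → ℝ} (hf : Continuous f) {a : ℝ} (ha : f a < 0)
    (htop : Tendsto f atTop atTop) : ∃ c, a < c ∧ f c = 0 := by
  obtain ⟨b, hb, hab⟩ := ((htop.eventually_ge_atTop 0).and (eventually_ge_atTop a)).exists
  obtain ⟨c, hc, hfc⟩ := intermediate_value_Icc hab hf.continuousOn ⟨ha.le, hb⟩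
  exact ⟨c, hc.1.lt_of_ne (by rintro rfl; exact ha.ne hfc), hfc⟩

variable {n : ℕ}

noncomputable def charPCoeff (lam : ℝ) (y : Fin n → ℝ) (k : Fin n) : ℝ :=
  (∏ i ∈ Iio k, y i) * ∏ i ∈ Ioi k, (lam + y i)

theorem charP_eq_prod_sub_sum [NeZero n] (lam : ℝ) (y z : Fin n → ℝ) :
    charP n lam y z = ∏ i, (lam + y i) - ∑ k, charPCoeff lam y k * z k := by
  have huniv : Ici (0 : Fin n) = univ := by rw [← bot_eq_zero, Ici_bot]
  have hIio : Iio (0 : Fin n) = ∅ := by rw [← bot_eq_zero, Iio_bot]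
  rw [charP, ← huniv, ← mul_prod_Ioi_eq_prod_Ici, ← add_sum_Ioi_eq_sum_Ici]
  simp only [charPCoeff, hIio, prod_empty, mul_right_comm _ (z _)]
  ring

theorem charP_update [NeZero n] (lam : ℝ) (y z : Fin n → ℝ) (k : Fin n) (s : ℝ) :
    charP n lam y (Function.update z k s) = charP n lam y z - charPCoeff lam y k * (s - z k) := by
  have hsum : ∑ j, charPCoeff lam y j * Function.update z k s j
      = ∑ j, charPCoeff lam y j * z j + charPCoeff lam y k * (s - z k) := by
    rw [← sub_eq_iff_eq_add', ← sum_sub_distrib, sum_eq_single k]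
    · simp [mul_sub]
    · intro j _ hj; simp [Function.update_of_ne hj]
    · simp
  rw [charP_eq_prod_sub_sum, charP_eq_prod_sub_sum, hsum]
  ring

theorem hasDerivAt_charP_update [NeZero n] (lam : ℝ) (y z : Fin n → ℝ) (k : Fin n) (t : ℝ) :
    HasDerivAt (fun s => charP n lam y (Function.update z k s)) (-charPCoeff lam y k) t := by
  simp_rw [charP_update]
  simpa using (((hasDerivAt_id t).sub_const (z k)).const_mul (charPCoeff lam y k)).const_sub
    (charP n lam y z)

theorem charPCoeff_pos {lam : ℝ} {y : Fin n → ℝ} {k : Fin n} (hy : ∀ i < k, 0 < y i)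
    (hlam : ∀ i, k < i → 0 < lam + y i) : 0 < charPCoeff lam y k :=
  mul_pos (prod_pos fun i hi => hy i (mem_Iio.1 hi)) (prod_pos fun i hi => hlam i (mem_Ioi.1 hi))

theorem charP_zero_neg [NeZero n] {y z : Fin n → ℝ} (hy : ∀ i < ⊤, 0 < y i) (hyn : y ⊤ = 0)
    (hzn : 0 < z ⊤) : charP n 0 y z < 0 := by
  have hsum : ∑ k, charPCoeff 0 y k * z k = charPCoeff 0 y ⊤ * z ⊤ := by
    refine sum_eq_single _ (fun j _ hj => ?_) (by simp)
    rw [charPCoeff, prod_eq_zero (i := ⊤) (mem_Ioi.2 (lt_top_iff_ne_top.2 hj)) (by simp [hyn])]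
    simp
  have hprod : ∏ i, (0 + y i) = 0 := prod_eq_zero (mem_univ ⊤) (by simp [hyn])
  rw [charP_eq_prod_sub_sum, hsum, hprod, zero_sub, neg_neg_iff_pos]
  exact mul_pos (charPCoeff_pos hy fun i hi => absurd hi not_top_lt) hzn

theorem continuous_charP [NeZero n] (y z : Fin n → ℝ) : Continuous fun lam => charP n lam y z := by
  unfold charP; fun_prop

open Polynomial in
theorem Polynomial.Monic.tendsto_eval_sub_atTop {𝕜 : Type*} [NormedField 𝕜] [LinearOrder 𝕜]
    [IsStrictOrderedRing 𝕜] [OrderTopology 𝕜] {p q : 𝕜[X]} (hp : p.Monic) (hp0 : 0 < p.degree)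
    (hq : q.degree < p.degree) : Tendsto (fun x => (p - q).eval x) atTop atTop :=
  (p - q).tendsto_atTop_of_leadingCoeff_nonneg (by rwa [degree_sub_eq_left_of_degree_lt hq])
    (by rw [(hp.sub_of_left hq).leadingCoeff]; exact zero_le_one)

open Polynomial in
theorem tendsto_charP_atTop [NeZero n] (y z : Fin n → ℝ) :
    Tendsto (fun lam => charP n lam y z) atTop atTop := by
  set p : ℝ[X] := ∏ i, (X + C (y i))
  set q : ℝ[X] := ∑ k, C (z k * ∏ i ∈ Iio k, y i) * ∏ i ∈ Ioi k, (X + C (y i))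
  have hp : p.Monic := monic_prod_of_monic _ _ fun i _ => monic_X_add_C (y i)
  have hpdeg : p.degree = n := by
    rw [degree_eq_natDegree hp.ne_zero, natDegree_prod_of_monic _ _ fun i _ => monic_X_add_C (y i)]
    simp
  have hq : q.degree < n := by
    refine (degree_sum_le _ _).trans_lt ((Finset.sup_lt_iff (WithBot.bot_lt_coe n)).2 fun k _ => ?_)
    have hmonic : (∏ i ∈ Ioi k, (X + C (y i))).Monic :=
      monic_prod_of_monic _ _ fun i _ => monic_X_add_C (y i)
    have hcard : #(Ioi k) < n := by rw [Fin.card_Ioi]; have := NeZero.pos n; omega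
    calc _ ≤ (C (z k * ∏ i ∈ Iio k, y i)).degree + (∏ i ∈ Ioi k, (X + C (y i))).degree :=
          degree_mul_le _ _
      _ ≤ 0 + (#(Ioi k) : WithBot ℕ) := by
          refine add_le_add degree_C_le (le_of_eq ?_)
          rw [degree_eq_natDegree hmonic.ne_zero,
            natDegree_prod_of_monic _ _ fun i _ => monic_X_add_C (y i)]
          simp
      _ < n := by rw [zero_add]; exact_mod_cast hcard
  have heval : ∀ lam, (p - q).eval lam = charP n lam y z := by
    intro lam
    simp only [p, q, charP_eq_prod_sub_sum, eval_sub, eval_prod, eval_finsetSum, eval_mul,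
      eval_add, eval_X, eval_C, charPCoeff]
    exact congrArg _ (sum_congr rfl fun k _ => by ring)
  simp_rw [← heval]
  exact hp.tendsto_eval_sub_atTop (by rw [hpdeg]; exact_mod_cast NeZero.pos n) (hpdeg ▸ hq)

theorem stmt_12_general (n : ℕ) [NeZero n] (y z : Fin n → ℝ)
    (hy : ∀ i : Fin n, i < (⊤ : Fin n) → 0 < y i)
    (hyn : y (⊤ : Fin n) = 0) (hzn : 0 < z (⊤ : Fin n))
    (w : ℝ)
    (hw_max : ∀ lam : ℝ, charP n lam y z = 0 → lam ≤ w) :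
    ∀ k : Fin n, deriv (fun s : ℝ => charP n w y (Function.update z k s)) (z k) < 0 := by
  intro k
  obtain ⟨c, hc_pos, hc_root⟩ := exists_gt_eq_zero_of_tendsto_atTop (continuous_charP y z)
    (charP_zero_neg hy hyn hzn) (tendsto_charP_atTop y z)
  have hw_pos : 0 < w := hc_pos.trans_le (hw_max c hc_root)
  have hy_nonneg : ∀ i, 0 ≤ y i := fun i =>
    (le_top (a := i)).lt_or_eq.elim (fun h => (hy i h).le) fun h => h ▸ hyn.ge
  rw [(hasDerivAt_charP_update w y z k (z k)).deriv, neg_lt_zero]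
  exact charPCoeff_pos (fun i hi => hy i (hi.trans_le le_top))
    fun i _ => add_pos_of_pos_of_nonneg hw_pos (hy_nonneg i)

/-- Under the assumptions `yᵢ > 0` (`i < n`), `zᵢ ≥ 0` (`i < n`), `yₙ = 0`,
`zₙ > 0`, the partial derivative `∂P/∂z_k` at `λ = w` is strictly negative for every
`1 ≤ k ≤ n`, where `w` is the largest real root of `P`. -/
theorem stmt_12 (n : ℕ) [NeZero n] (y z : Fin n → ℝ)
    (hy : ∀ i : Fin n, i < (⊤ : Fin n) → 0 < y i)
    (hz : ∀ i : Fin n, i < (⊤ : Fin n) → 0 ≤ z i)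
    (hyn : y (⊤ : Fin n) = 0) (hzn : 0 < z (⊤ : Fin n))
    (w : ℝ) (hw_root : charP n w y z = 0)
    (hw_max : ∀ lam : ℝ, charP n lam y z = 0 → lam ≤ w) :
    ∀ k : Fin n, deriv (fun s : ℝ => charP n w y (Function.update z k s)) (z k) < 0 :=
  stmt_12_general n y z hy hyn hzn w hw_max
end

section
/- Under the assumptions y_i > 0 for i < n, z_i ≥ 0 for i < n, y_n = 0, z_n > 0, and additionally z_k = 0 for some 1 < k < n: if w > 0 satisfies P(w,y,z) = 0, then (∂P/∂y_k)|_{λ=w} < 0. -/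
open Finset

/-! Since `z_k = 0` the term `P_k` vanishes, so `P(w, y, z)` is affine in `y_k`: it equals
`(w + y_k) D - y_k E`, where `E`, coming from the `P_j` with `j > k`, is positive thanks to `P_n`.
At a root `(w + y_k) D = y_k E < (w + y_k) E`, hence `∂P/∂y_k = D - E < 0`. -/

theorem Finset.sum_Ioi_eq_sum_Ioo_add_add_sum_Ioi {α M : Type*} [LinearOrder α]
    [LocallyFiniteOrder α] [LocallyFiniteOrderTop α] [AddCommMonoid M] (f : α → M) {a k : α}
    (hak : a < k) : ∑ j ∈ Ioi a, f j = ∑ j ∈ Ioo a k, f j + (f k + ∑ j ∈ Ioi k, f j) := by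
  have hlt : (Ioi a).filter (· < k) = Ioo a k := by ext; simp
  have hge : (Ioi a).filter (fun j => ¬ j < k) = Ici k := by
    ext j; simp only [mem_filter, mem_Ioi, mem_Ici, not_lt]
    exact ⟨And.right, fun hkj => ⟨hak.trans_le hkj, hkj⟩⟩
  rw [← sum_filter_add_sum_filter_not (Ioi a) (· < k), hlt, hge, add_sum_Ioi_eq_sum_Ici]

theorem Finset.prod_comp_update_of_mem {ι M β : Type*} [DecidableEq ι] [CommMonoid M]
    {t : Finset ι} {k : ι} (hk : k ∈ t) (g : β → M) (y : ι → β) (s : β) :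
    ∏ i ∈ t, g (Function.update y k s i) = g s * ∏ i ∈ t.erase k, g (y i) := by
  rw [← mul_prod_erase t _ hk, Function.update_self]
  congr 1
  exact prod_congr rfl fun i hi => by rw [Function.update_of_ne (ne_of_mem_erase hi)]

theorem Finset.prod_comp_update_of_notMem {ι M β : Type*} [DecidableEq ι] [CommMonoid M]
    {t : Finset ι} {k : ι} (hk : k ∉ t) (g : β → M) (y : ι → β) (s : β) :
    ∏ i ∈ t, g (Function.update y k s i) = ∏ i ∈ t, g (y i) :=
  prod_congr rfl fun i hi => by rw [Function.update_of_ne (ne_of_mem_of_not_mem hi hk)]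

theorem deriv_affine_lt_zero_of_root {a b w t : ℝ} (hb : 0 < b) (hw : 0 < w) (hwt : 0 < w + t)
    (hroot : (w + t) * a - t * b = 0) : deriv (fun s => (w + s) * a - s * b) t < 0 := by
  have hderiv : HasDerivAt (fun s => (w + s) * a - s * b) (1 * a - 1 * b) t :=
    (((hasDerivAt_id' t).const_add w).mul_const a).sub ((hasDerivAt_id' t).mul_const b)
  rw [hderiv.deriv]
  -- `(w + t) (a - b) = -w b < 0`
  nlinarith [mul_pos hw hb]

theorem Fin.forall_of_forall_lt_top {n : ℕ} [NeZero n] {p : Fin n → Prop}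
    (hlt : ∀ i, i < ⊤ → p i) (htop : p ⊤) (i : Fin n) : p i := by
  rcases (le_top : i ≤ ⊤).lt_or_eq with h | rfl
  exacts [hlt i h, htop]

namespace charP

variable {n : ℕ} [NeZero n] (w : ℝ) (y z : Fin n → ℝ) (k : Fin n)

/-- When `z_k = 0`, `P(w, y, z) = (w + y_k) · headCoeff - y_k · tailCoeff` with coefficients free
of `y_k`: `headCoeff` comes from `P_1` and the `P_j` with `j < k`, `tailCoeff` from the `P_j` with
`j > k`. -/
noncomputable def headCoeff : ℝ :=
  (w + y 0 - z 0) * ∏ i ∈ (Ioi 0).erase k, (w + y i)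
    - ∑ j ∈ Ioo 0 k, (∏ i ∈ Iio j, y i) * z j * ∏ i ∈ (Ioi j).erase k, (w + y i)

noncomputable def tailCoeff : ℝ :=
  ∑ j ∈ Ioi k, (∏ i ∈ (Iio j).erase k, y i) * z j * ∏ i ∈ Ioi j, (w + y i)

variable {z k}

theorem update_eq (hk0 : 0 < k) (hzk : z k = 0) (s : ℝ) :
    charP n w (Function.update y k s) z = (w + s) * headCoeff w y z k - s * tailCoeff w y z k := by
  have hhead : ∀ j ∈ Ioo 0 k,
      (∏ i ∈ Iio j, Function.update y k s i) * z j * ∏ i ∈ Ioi j, (w + Function.update y k s i)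
        = (w + s) * ((∏ i ∈ Iio j, y i) * z j * ∏ i ∈ (Ioi j).erase k, (w + y i)) := by
    intro j hj
    have hjk := (mem_Ioo.mp hj).2
    rw [prod_update_of_notMem (s := Iio j) (i := k) (by simpa using hjk.le),
      prod_comp_update_of_mem (mem_Ioi.mpr hjk) (w + ·)]
    ring
  have htail : ∀ j ∈ Ioi k,
      (∏ i ∈ Iio j, Function.update y k s i) * z j * ∏ i ∈ Ioi j, (w + Function.update y k s i)
        = s * ((∏ i ∈ (Iio j).erase k, y i) * z j * ∏ i ∈ Ioi j, (w + y i)) := by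
    intro j hj
    have hkj := mem_Ioi.mp hj
    rw [prod_update_of_mem (mem_Iio.mpr hkj), sdiff_singleton_eq_erase,
      prod_comp_update_of_notMem (t := Ioi j) (by simpa using hkj.le) (w + ·)]
    ring
  rw [charP, sum_Ioi_eq_sum_Ioo_add_add_sum_Ioi _ hk0, sum_congr rfl hhead, sum_congr rfl htail,
    ← mul_sum, ← mul_sum, prod_comp_update_of_mem (mem_Ioi.mpr hk0) (w + ·),
    Function.update_of_ne hk0.ne, hzk, headCoeff, tailCoeff]
  ring

theorem tailCoeff_pos (hw : 0 ≤ w) (hy : ∀ i, i < ⊤ → 0 < y i) (hyn : 0 ≤ y ⊤)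
    (hz : ∀ i, 0 ≤ z i) (hzn : 0 < z ⊤) (hkn : k < ⊤) : 0 < tailCoeff w y z k := by
  have hy0 : ∀ i, 0 ≤ y i := Fin.forall_of_forall_lt_top (fun i hi => (hy i hi).le) hyn
  have hprod_Iio : ∀ j, 0 < ∏ i ∈ (Iio j).erase k, y i := fun j =>
    prod_pos fun i hi => hy i ((mem_Iio.mp (mem_of_mem_erase hi)).trans_le le_top)
  refine sum_pos' (fun j _ => ?_) ⟨⊤, mem_Ioi.mpr hkn, ?_⟩
  · exact mul_nonneg (mul_nonneg (hprod_Iio j).le (hz j))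
      (prod_nonneg fun i _ => add_nonneg hw (hy0 i))
  · simpa using mul_pos (hprod_Iio ⊤) hzn

end charP

/-- Under the assumptions `yᵢ > 0` (`i < n`), `zᵢ ≥ 0` (`i < n`), `yₙ = 0`,
`zₙ > 0`, and additionally `z_k = 0` for some `1 < k < n`: if `w > 0` satisfies
`P(w, y, z) = 0`, then `(∂P/∂y_k)|_{λ=w} < 0`. -/
theorem stmt_13 (n : ℕ) [NeZero n] (y z : Fin n → ℝ)
    (hy : ∀ i : Fin n, i < (⊤ : Fin n) → 0 < y i)
    (hz : ∀ i : Fin n, i < (⊤ : Fin n) → 0 ≤ z i)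
    (hyn : y (⊤ : Fin n) = 0) (hzn : 0 < z (⊤ : Fin n))
    (k : Fin n) (hk0 : 0 < k) (hkn : k < (⊤ : Fin n)) (hzk : z k = 0)
    (w : ℝ) (hw : 0 < w) (hw_root : charP n w y z = 0) :
    deriv (fun s : ℝ => charP n w (Function.update y k s) z) (y k) < 0 := by
  have hE := charP.tailCoeff_pos w y hw.le hy hyn.ge
    (Fin.forall_of_forall_lt_top hz hzn.le) hzn hkn
  have hroot := charP.update_eq w y hk0 hzk (y k)
  rw [Function.update_eq_self, hw_root] at hroot
  simp_rw [charP.update_eq w y hk0 hzk]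
  exact deriv_affine_lt_zero_of_root hE hw (by linarith [hy k hkn]) hroot.symm
end
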